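/- arXiv:0907.4866 — 2 statements merged into one kernel-verified Lean document; each statement's English description precedes it below -/
import Mathlib

section
/- Let d ≥ 3 and n ≥ 1 an integer, and define σ_n^{il}(x) = x^i x^l/(|x|² + 1/n) on ℝ^d for i, l = 1,…,d. Then for every x ∈ ℝ^d, Σ_{i,j,l} ∂_i σ_n^{jl}(x) ∂_j σ_n^{il}(x) = [ (d+3)|x|²(|x|²+1/n)² − 8|x|⁴/n − 4|x|⁶ ] / (|x|²+1/n)⁴, and consequently Σ_{i,j,l} ∂_i σ_n^{jl}(x) ∂_j σ_n^{il}(x) ≤ (d+3)/(|x|² + 1/n). -/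
open MeasureTheory
open scoped BigOperators

/-- The partial derivative `∂_i f` on `ℝ^d`. -/
noncomputable def pd {d : ℕ} (i : Fin d) (f : EuclideanSpace ℝ (Fin d) → ℝ)
    (x : EuclideanSpace ℝ (Fin d)) : ℝ :=
  fderiv ℝ f x (EuclideanSpace.single i 1)

/-- The matrix field `σ_n^{il}(x) = x^i x^l/(|x|² + 1/n)`. -/
noncomputable def sFld (d n : ℕ) (i l : Fin d) (x : EuclideanSpace ℝ (Fin d)) : ℝ :=
  x i * x l / (‖x‖ ^ 2 + 1 / (n : ℝ))

set_option maxHeartbeats 1000000 in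
lemma pd_sFld (d n : ℕ) (hn : 1 ≤ n) (i j l : Fin d) (x : EuclideanSpace ℝ (Fin d)) :
    pd i (sFld d n j l) x =
      ((if i = j then x l else 0) + (if i = l then x j else 0)) / (‖x‖ ^ 2 + 1 / (n : ℝ))
        - 2 * x i * (x j * x l) / (‖x‖ ^ 2 + 1 / (n : ℝ)) ^ 2 := by
  have hn0 : (0:ℝ) < 1 / (n:ℝ) := by positivity
  have hQx : (‖x‖ ^ 2 + 1 / (n:ℝ)) ≠ 0 := by positivity
  have h1 : HasFDerivAt (fun y : EuclideanSpace ℝ (Fin d) => y j)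
      (EuclideanSpace.proj j : EuclideanSpace ℝ (Fin d) →L[ℝ] ℝ) x :=
    (EuclideanSpace.proj (𝕜 := ℝ) j).hasFDerivAt
  have h2 : HasFDerivAt (fun y : EuclideanSpace ℝ (Fin d) => y l)
      (EuclideanSpace.proj l : EuclideanSpace ℝ (Fin d) →L[ℝ] ℝ) x :=
    (EuclideanSpace.proj (𝕜 := ℝ) l).hasFDerivAt
  have hmul := h1.mul h2
  have hQ : HasFDerivAt (fun y : EuclideanSpace ℝ (Fin d) => ‖y‖ ^ 2 + 1 / (n:ℝ))
      (2 • (innerSL ℝ x)) x :=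
    (hasStrictFDerivAt_norm_sq x).hasFDerivAt.add_const _
  have hinv := (hasFDerivAt_inv' hQx).comp x hQ
  have hf := hmul.mul hinv
  have hf' : HasFDerivAt (sFld d n j l)
      ((x j * x l) • ((-ContinuousLinearMap.mulLeftRight ℝ ℝ (‖x‖ ^ 2 + 1 / (n:ℝ))⁻¹
          (‖x‖ ^ 2 + 1 / (n:ℝ))⁻¹).comp (2 • (innerSL ℝ x)))
        + (‖x‖ ^ 2 + 1 / (n:ℝ))⁻¹ • ((x j) • (EuclideanSpace.proj l : EuclideanSpace ℝ (Fin d) →L[ℝ] ℝ)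
        + (x l) • (EuclideanSpace.proj j : EuclideanSpace ℝ (Fin d) →L[ℝ] ℝ))) x := by
    have heq : sFld d n j l = fun y : EuclideanSpace ℝ (Fin d) =>
        (y j * y l) * ((fun y : EuclideanSpace ℝ (Fin d) => ‖y‖ ^ 2 + 1 / (n:ℝ)) y)⁻¹ := by
      funext y; simp [sFld, div_eq_mul_inv]
    rw [heq]
    exact hf
  rw [pd, hf'.fderiv]
  simp only [ContinuousLinearMap.add_apply, ContinuousLinearMap.smul_apply,
    ContinuousLinearMap.comp_apply, ContinuousLinearMap.neg_apply, smul_eq_mul,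
    ContinuousLinearMap.mulLeftRight_apply, innerSL_apply_apply, PiLp.proj_apply,
    EuclideanSpace.single_apply, EuclideanSpace.inner_single_right]
  simp only [starRingEnd_apply, star_trivial, nsmul_eq_mul, Nat.cast_ofNat, one_mul]
  by_cases hij : i = j <;> by_cases hil : i = l <;>
    simp only [hij, hil, if_pos, if_neg, if_true, eq_self_iff_true] <;>
    [skip; skip; skip; skip] <;>
    simp [hij, hil, eq_comm, Ne.symm] <;> field_simp <;> ring

set_option maxHeartbeats 1000000 in
lemma sum3_key (d : ℕ) (x : Fin d → ℝ) (a b : ℝ) :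
    ∑ i, ∑ j, ∑ l,
      ((((if i = j then x l else 0) + (if i = l then x j else 0)) * a
          - b * (x i * (x j * x l))) *
      (((if j = i then x l else 0) + (if j = l then x i else 0)) * a
          - b * (x j * (x i * x l))))
    = (d + 3) * (∑ k, x k ^ 2) * a ^ 2
        - 4 * a * b * (∑ k, x k ^ 2) ^ 2 + b ^ 2 * (∑ k, x k ^ 2) ^ 3 := by
  have hS : ∀ (c : ℝ), ∑ k, c * x k ^ 2 = c * ∑ k, x k ^ 2 := by
    intro c; rw [Finset.mul_sum]
  simp only [sub_mul, mul_sub, add_mul, mul_add, ite_mul, mul_ite, zero_mul, mul_zero,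
    Finset.sum_sub_distrib, Finset.sum_add_distrib, Finset.sum_ite_eq, Finset.sum_ite_eq',
    Finset.mem_univ, if_true, Finset.sum_ite_irrel, Finset.sum_const_zero,
    ← Finset.mul_sum, ← Finset.sum_mul]
  have e1 : ∀ m : Fin d, x m * a * (x m * a) = a ^ 2 * x m ^ 2 := by intro m; ring
  have e2 : ∀ k m : Fin d, b * (x k * (x k * x m)) * (x m * a)
      = a * b * (x k ^ 2 * x m ^ 2) := by intro k m; ring
  have e4 : ∀ k m : Fin d, x m * a * (b * (x k * (x k * x m)))
      = a * b * (x k ^ 2 * x m ^ 2) := by intro k m; ring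
  have e5 : ∀ k m : Fin d, x m * a * (b * (x m * (x k * x k)))
      = a * b * (x k ^ 2 * x m ^ 2) := by intro k m; ring
  have e6 : ∀ k m l : Fin d, b * (x k * (x m * x l)) * (b * (x m * (x k * x l)))
      = b ^ 2 * (x k ^ 2 * (x m ^ 2 * x l ^ 2)) := by intro k m l; ring
  have e3 : ∀ k : Fin d, b * (x k * ∑ i, x i * x i) * (x k * a)
      = a * b * (x k ^ 2 * ∑ i, x i ^ 2) := by
    intro k
    simp only [← pow_two]
    ring
  simp only [e1, e2, e3, e4, e5, e6, ← Finset.mul_sum, ← Finset.sum_mul,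
    Finset.sum_const, Finset.card_univ, Fintype.card_fin, nsmul_eq_mul, smul_eq_mul]
  ring

/-- For `d ≥ 3`, `n ≥ 1` and `σ_n^{il}(x) = x^i x^l/(|x|²+1/n)`:
`Σ_{i,j,l} ∂_i σ_n^{jl}(x) ∂_j σ_n^{il}(x)
  = [(d+3)|x|²(|x|²+1/n)² − 8|x|⁴/n − 4|x|⁶]/(|x|²+1/n)⁴ ≤ (d+3)/(|x|²+1/n)`. -/
theorem stmt15 (d n : ℕ) (hd : 3 ≤ d) (hn : 1 ≤ n) :
    ∀ x : EuclideanSpace ℝ (Fin d),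
      (∑ i, ∑ j, ∑ l, pd i (sFld d n j l) x * pd j (sFld d n i l) x =
        (((d : ℝ) + 3) * ‖x‖ ^ 2 * (‖x‖ ^ 2 + 1 / (n : ℝ)) ^ 2 -
          8 * ‖x‖ ^ 4 / (n : ℝ) - 4 * ‖x‖ ^ 6) / (‖x‖ ^ 2 + 1 / (n : ℝ)) ^ 4) ∧
      ∑ i, ∑ j, ∑ l, pd i (sFld d n j l) x * pd j (sFld d n i l) x ≤
        ((d : ℝ) + 3) / (‖x‖ ^ 2 + 1 / (n : ℝ)) := by
  intro x
  have hn0 : (0:ℝ) < 1 / (n:ℝ) := by positivity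
  have hQpos : (0:ℝ) < ‖x‖ ^ 2 + 1 / (n:ℝ) := by positivity
  have hQx : (‖x‖ ^ 2 + 1 / (n:ℝ)) ≠ 0 := ne_of_gt hQpos
  have hnne : (n:ℝ) ≠ 0 := by
    have : (0:ℝ) < (n:ℝ) := by exact_mod_cast Nat.lt_of_lt_of_le Nat.zero_lt_one hn
    exact ne_of_gt this
  have hnorm : (∑ k, x k ^ 2) = ‖x‖ ^ 2 := by
    rw [EuclideanSpace.norm_eq, Real.sq_sqrt (by positivity)]
    congr 1; funext k; rw [Real.norm_eq_abs, sq_abs]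
  have hpd : ∀ i j l : Fin d, pd i (sFld d n j l) x * pd j (sFld d n i l) x =
      ((((if i = j then x l else 0) + (if i = l then x j else 0)) * (‖x‖ ^ 2 + 1 / (n:ℝ))⁻¹
          - (2 / (‖x‖ ^ 2 + 1 / (n:ℝ)) ^ 2) * (x i * (x j * x l))) *
      (((if j = i then x l else 0) + (if j = l then x i else 0)) * (‖x‖ ^ 2 + 1 / (n:ℝ))⁻¹
          - (2 / (‖x‖ ^ 2 + 1 / (n:ℝ)) ^ 2) * (x j * (x i * x l)))) := by
    intro i j l
    rw [pd_sFld d n hn, pd_sFld d n hn]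
    ring
  have hsum : ∑ i, ∑ j, ∑ l, pd i (sFld d n j l) x * pd j (sFld d n i l) x =
      ((d:ℝ) + 3) * ‖x‖ ^ 2 * ((‖x‖ ^ 2 + 1 / (n:ℝ))⁻¹) ^ 2
        - 4 * (‖x‖ ^ 2 + 1 / (n:ℝ))⁻¹ * (2 / (‖x‖ ^ 2 + 1 / (n:ℝ)) ^ 2) * (‖x‖ ^ 2) ^ 2
        + (2 / (‖x‖ ^ 2 + 1 / (n:ℝ)) ^ 2) ^ 2 * (‖x‖ ^ 2) ^ 3 := by
    simp only [hpd]
    rw [sum3_key d (fun k => x k) ((‖x‖ ^ 2 + 1 / (n:ℝ))⁻¹) (2 / (‖x‖ ^ 2 + 1 / (n:ℝ)) ^ 2)]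
    rw [hnorm]
  have heq : ∑ i, ∑ j, ∑ l, pd i (sFld d n j l) x * pd j (sFld d n i l) x =
      (((d : ℝ) + 3) * ‖x‖ ^ 2 * (‖x‖ ^ 2 + 1 / (n : ℝ)) ^ 2 -
          8 * ‖x‖ ^ 4 / (n : ℝ) - 4 * ‖x‖ ^ 6) / (‖x‖ ^ 2 + 1 / (n : ℝ)) ^ 4 := by
    rw [hsum]
    field_simp
    ring
  refine ⟨heq, ?_⟩
  rw [heq, div_le_div_iff₀ (by positivity) hQpos]
  have hSQ : ‖x‖ ^ 2 ≤ ‖x‖ ^ 2 + 1 / (n:ℝ) := by linarith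
  have hd3 : (0:ℝ) ≤ (d:ℝ) + 3 := by positivity
  have h8 : (0:ℝ) ≤ 8 * ‖x‖ ^ 4 / (n:ℝ) := by positivity
  have h6 : (0:ℝ) ≤ 4 * ‖x‖ ^ 6 := by positivity
  nlinarith [mul_nonneg (mul_nonneg hd3 (pow_nonneg hQpos.le 3)) (sub_nonneg.2 hSQ),
    mul_nonneg h8 hQpos.le, mul_nonneg h6 hQpos.le, pow_pos hQpos 3, pow_pos hQpos 4]
end

section
/- Let d ≥ 3 and n ≥ 1 an integer, and define σ_n^{il}(x) = x^i x^l/(|x|² + 1/n) on ℝ^d for i, l = 1,…,d. Then for every x ∈ ℝ^d, Σ_{i,l} σ_n^{il}(x) ∂_i( Σ_j ∂_j σ_n^{jl} )(x) = [3(d−1)|x|⁴ + (d+1)|x|²/n]/(|x|²+1/n)³ − 4|x|⁴((d−1)|x|² + (d+1)/n)/(|x|²+1/n)⁴ ≤ (4d−2)/(|x|² + 1/n). -/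
open MeasureTheory
open scoped BigOperators

/-!
Write `s = |x|²`, `c = 1/n`. The field is radial, `σ_n^{jl}(x) = x^j x^l ψ(s)` with
`ψ(s) = (s + c)⁻¹`. For any profile `ψ`, the divergence `Σ_j ∂_j (x^j x^l ψ(s))` is again of the
form `x^l φ(s)`, with `φ = (d + 1) ψ + 2 s ψ'`, and contracting `∂_i (x^l φ(s))` against `x^i x^l`
gives `s φ(s) + 2 s² φ'(s)`. So the left side is an explicit rational function of `s`; over the
denominator `(s + c)⁴` its numerator is `s ((d + 1) c² - 6 s c - (d - 1) s²) ≤ (d + 1) (s + c)³`.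
-/

section Radial

variable {d : ℕ}

theorem HasFDerivAt.pd_eq {f : EuclideanSpace ℝ (Fin d) → ℝ}
    {f' : EuclideanSpace ℝ (Fin d) →L[ℝ] ℝ} {x : EuclideanSpace ℝ (Fin d)}
    (h : HasFDerivAt f f' x) (i : Fin d) : pd i f x = f' (EuclideanSpace.single i 1) := by
  rw [pd, h.fderiv]

theorem hasFDerivAt_coord (k : Fin d) (x : EuclideanSpace ℝ (Fin d)) :
    HasFDerivAt (fun y : EuclideanSpace ℝ (Fin d) => y k) (EuclideanSpace.proj (𝕜 := ℝ) k) x :=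
  (EuclideanSpace.proj (𝕜 := ℝ) k).hasFDerivAt

theorem pd_mul_comp_norm_sq {f : EuclideanSpace ℝ (Fin d) → ℝ}
    {f' : EuclideanSpace ℝ (Fin d) →L[ℝ] ℝ} {x : EuclideanSpace ℝ (Fin d)}
    (hf : HasFDerivAt f f' x) {φ : ℝ → ℝ} {φ' : ℝ} (hφ : HasDerivAt φ φ' (‖x‖ ^ 2))
    (i : Fin d) :
    pd i (fun y => f y * φ (‖y‖ ^ 2)) x =
      f' (EuclideanSpace.single i 1) * φ (‖x‖ ^ 2) + f x * (2 * x i * φ') := by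
  have hφx : HasFDerivAt (fun y => φ (‖y‖ ^ 2)) (φ' • 2 • innerSL ℝ x) x :=
    hφ.comp_hasFDerivAt x (hasStrictFDerivAt_norm_sq x).hasFDerivAt
  rw [(hf.fun_mul hφx).pd_eq]
  simp only [add_apply, smul_apply, coe_innerSL_apply, EuclideanSpace.inner_single_right,
    Real.ringHom_apply, one_mul, nsmul_eq_mul, Nat.cast_ofNat, smul_eq_mul]
  ring

theorem sum_pd_coord_mul_coord_mul_comp_norm_sq {x : EuclideanSpace ℝ (Fin d)}
    {ψ : ℝ → ℝ} {ψ' : ℝ} (hψ : HasDerivAt ψ ψ' (‖x‖ ^ 2)) (l : Fin d) :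
    ∑ j, pd j (fun y => y j * y l * ψ (‖y‖ ^ 2)) x =
      x l * (((d : ℝ) + 1) * ψ (‖x‖ ^ 2) + 2 * ‖x‖ ^ 2 * ψ') := by
  rw [Finset.sum_congr rfl fun j _ => pd_mul_comp_norm_sq
    ((hasFDerivAt_coord j x).fun_mul (hasFDerivAt_coord l x)) hψ j]
  simp only [add_apply, smul_apply, PiLp.proj_apply, PiLp.single_apply, smul_eq_mul, mul_ite,
    mul_one, mul_zero]
  simp only [add_mul, Finset.sum_add_distrib, ← Finset.sum_mul, Finset.sum_ite_eq,
    Finset.mem_univ, if_true, Finset.sum_const, Finset.card_univ, Fintype.card_fin, nsmul_eq_mul]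
  have hquad : ∑ j, x j * x l * (2 * x j * ψ') = x l * (2 * ‖x‖ ^ 2 * ψ') := by
    rw [EuclideanSpace.real_norm_sq_eq, Finset.mul_sum, Finset.sum_mul, Finset.mul_sum]
    exact Finset.sum_congr rfl fun j _ => by ring
  rw [hquad]
  ring

theorem sum_coord_mul_coord_mul_pd_coord_mul_comp_norm_sq {x : EuclideanSpace ℝ (Fin d)}
    {φ : ℝ → ℝ} {φ' : ℝ} (hφ : HasDerivAt φ φ' (‖x‖ ^ 2)) :
    ∑ i, ∑ l, x i * x l * pd i (fun y => y l * φ (‖y‖ ^ 2)) x =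
      ‖x‖ ^ 2 * φ (‖x‖ ^ 2) + 2 * (‖x‖ ^ 2) ^ 2 * φ' := by
  simp only [fun i l => pd_mul_comp_norm_sq (hasFDerivAt_coord l x) hφ i]
  simp only [PiLp.proj_apply, PiLp.single_apply, ite_mul, one_mul, zero_mul]
  simp only [mul_add, Finset.sum_add_distrib, mul_ite, mul_zero, Finset.sum_ite_eq',
    Finset.mem_univ, if_true]
  have hquart : ∑ i, ∑ l, x i * x l * (x l * (2 * x i * φ')) = 2 * (‖x‖ ^ 2) ^ 2 * φ' := by
    rw [EuclideanSpace.real_norm_sq_eq, sq, Finset.sum_mul_sum, Finset.mul_sum, Finset.sum_mul]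
    exact Finset.sum_congr rfl fun i _ => by
      rw [Finset.mul_sum, Finset.sum_mul]; exact Finset.sum_congr rfl fun l _ => by ring
  rw [hquart, EuclideanSpace.real_norm_sq_eq, Finset.sum_mul]
  congr 1
  exact Finset.sum_congr rfl fun i _ => by ring

end Radial

theorem hasDerivAt_div_add_sub_mul_div_add_sq (D c s : ℝ) (hs : s + c ≠ 0) :
    HasDerivAt (fun t => D / (t + c) - 2 * t / (t + c) ^ 2)
      (-(D + 2) / (s + c) ^ 2 + 4 * s / (s + c) ^ 3) s := by
  have hQ : HasDerivAt (fun t => t + c) 1 s := (hasDerivAt_id s).add_const c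
  have h := ((hQ.fun_inv hs).const_mul D).fun_sub
    (((hasDerivAt_id' s).const_mul 2).fun_mul ((hQ.fun_pow 2).fun_inv (pow_ne_zero 2 hs)))
  simp only [← div_eq_mul_inv] at h
  exact h.congr_deriv (by field_simp; ring)

section Sigma

variable {d n : ℕ}

theorem sum_pd_sFld (hn : (0 : ℝ) < n) (l : Fin d) :
    (fun y => ∑ j, pd j (sFld d n j l) y) = fun y =>
      y l * (((d : ℝ) + 1) / (‖y‖ ^ 2 + 1 / n) - 2 * ‖y‖ ^ 2 / (‖y‖ ^ 2 + 1 / n) ^ 2) := by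
  ext y
  have hQ : ‖y‖ ^ 2 + 1 / (n : ℝ) ≠ 0 := by positivity
  have hψ : HasDerivAt (fun s => (s + 1 / (n : ℝ))⁻¹) (-1 / (‖y‖ ^ 2 + 1 / n) ^ 2) (‖y‖ ^ 2) :=
    ((hasDerivAt_id _).add_const _).inv hQ
  convert sum_pd_coord_mul_coord_mul_comp_norm_sq hψ l using 1
  · exact Finset.sum_congr rfl fun j _ => congrArg (pd j · y) (funext fun z => div_eq_mul_inv _ _)
  · field_simp; ring

theorem sum_sFld_mul_pd_coord_mul_comp_norm_sq {x : EuclideanSpace ℝ (Fin d)}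
    {φ : ℝ → ℝ} {φ' : ℝ} (hφ : HasDerivAt φ φ' (‖x‖ ^ 2)) :
    ∑ i, ∑ l, sFld d n i l x * pd i (fun y => y l * φ (‖y‖ ^ 2)) x =
      (‖x‖ ^ 2 * φ (‖x‖ ^ 2) + 2 * (‖x‖ ^ 2) ^ 2 * φ') / (‖x‖ ^ 2 + 1 / n) := by
  simp only [sFld, div_mul_eq_mul_div, ← Finset.sum_div]
  rw [sum_coord_mul_coord_mul_pd_coord_mul_comp_norm_sq hφ]

end Sigma

theorem div_pow_three_sub_div_pow_four_le (D s m : ℝ) (hD : 1 ≤ D) (hs : 0 ≤ s) (hm : 0 < m) :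
    (3 * (D - 1) * s ^ 2 + (D + 1) * s / m) / (s + 1 / m) ^ 3
      - 4 * s ^ 2 * ((D - 1) * s + (D + 1) / m) / (s + 1 / m) ^ 4
      ≤ (4 * D - 2) / (s + 1 / m) := by
  set c := 1 / m with hc_def
  have hc : 0 < c := by positivity
  calc (3 * (D - 1) * s ^ 2 + (D + 1) * s / m) / (s + c) ^ 3
        - 4 * s ^ 2 * ((D - 1) * s + (D + 1) / m) / (s + c) ^ 4
      = s * ((D + 1) * c ^ 2 - 6 * s * c - (D - 1) * s ^ 2) / (s + c) ^ 4 := by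
        rw [hc_def]; field_simp; ring
    _ ≤ (D + 1) * (s + c) ^ 3 / (s + c) ^ 4 := by
        gcongr ?_ / _
        nlinarith [mul_nonneg (mul_nonneg hs hs) hc.le, mul_nonneg (mul_nonneg hs hs) hs,
          mul_nonneg (mul_nonneg hs hc.le) hc.le, pow_pos hc 3]
    _ = (D + 1) / (s + c) := by field_simp
    _ ≤ (4 * D - 2) / (s + c) := by gcongr; linarith

/-- For `d ≥ 3`, `n ≥ 1` and `σ_n^{il}(x) = x^i x^l/(|x|²+1/n)`:
`Σ_{i,l} σ_n^{il}(x) ∂_i(Σ_j ∂_j σ_n^{jl})(x)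
  = [3(d−1)|x|⁴ + (d+1)|x|²/n]/(|x|²+1/n)³ − 4|x|⁴((d−1)|x|² + (d+1)/n)/(|x|²+1/n)⁴
  ≤ (4d−2)/(|x|²+1/n)`. -/
theorem stmt16 (d n : ℕ) (hd : 3 ≤ d) (hn : 1 ≤ n) :
    ∀ x : EuclideanSpace ℝ (Fin d),
      (∑ i, ∑ l, sFld d n i l x * pd i (fun y => ∑ j, pd j (sFld d n j l) y) x =
        (3 * ((d : ℝ) - 1) * ‖x‖ ^ 4 + ((d : ℝ) + 1) * ‖x‖ ^ 2 / (n : ℝ)) /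
            (‖x‖ ^ 2 + 1 / (n : ℝ)) ^ 3 -
          4 * ‖x‖ ^ 4 * (((d : ℝ) - 1) * ‖x‖ ^ 2 + ((d : ℝ) + 1) / (n : ℝ)) /
            (‖x‖ ^ 2 + 1 / (n : ℝ)) ^ 4) ∧
      ∑ i, ∑ l, sFld d n i l x * pd i (fun y => ∑ j, pd j (sFld d n j l) y) x ≤
        (4 * (d : ℝ) - 2) / (‖x‖ ^ 2 + 1 / (n : ℝ)) := by
  intro x
  have hn' : (0 : ℝ) < n := by exact_mod_cast hn
  have hQ : ‖x‖ ^ 2 + 1 / (n : ℝ) ≠ 0 := by positivity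
  have hφ := hasDerivAt_div_add_sub_mul_div_add_sq ((d : ℝ) + 1) (1 / n) (‖x‖ ^ 2) hQ
  have hform : ∑ i, ∑ l, sFld d n i l x * pd i (fun y => ∑ j, pd j (sFld d n j l) y) x =
      (3 * ((d : ℝ) - 1) * ‖x‖ ^ 4 + ((d : ℝ) + 1) * ‖x‖ ^ 2 / (n : ℝ)) /
          (‖x‖ ^ 2 + 1 / (n : ℝ)) ^ 3 -
        4 * ‖x‖ ^ 4 * (((d : ℝ) - 1) * ‖x‖ ^ 2 + ((d : ℝ) + 1) / (n : ℝ)) /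
          (‖x‖ ^ 2 + 1 / (n : ℝ)) ^ 4 := by
    simp only [sum_pd_sFld hn']
    rw [sum_sFld_mul_pd_coord_mul_comp_norm_sq hφ]
    field_simp
    ring
  refine ⟨hform, hform ▸ ?_⟩
  rw [show ‖x‖ ^ 4 = (‖x‖ ^ 2) ^ 2 by ring]
  exact div_pow_three_sub_div_pow_four_le _ _ _ (by norm_cast; omega) (by positivity) hn'
end
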